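/- Let E be a directed graph, K a field, and x ∈ ∂E a path that is not rational. Then for all a, b ∈ (K^*)^{E^1} there are graded isomorphisms of ℤ-graded L_K(E)-modules V^a_{[x]} ≅ V^b_{[x]} ≅ V_{[x]} (where each module carries the grading V_{[x],k} = span_K{y ∈ [x] : y ∼_k x}). -/

import Mathlib

open scoped Classical

/-- A directed graph: vertices, edges, source and range maps. -/
structure DirGraph : Type 1 where
  V : Type
  E : Type
  s : E → V
  r : E → V

namespace DirGraph

variable (G : DirGraph)

/-- A finite path: a source vertex together with a compatible list of edges
(the empty list gives the path of length 0 at `src`). -/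
structure FinPath where
  src : G.V
  edges : List G.E
  src_eq : ∀ e ∈ edges.head?, G.s e = src
  chain : edges.Chain' (fun e f => G.r e = G.s f)

variable {G}

/-- The range of a finite path. -/
def FinPath.rng (μ : G.FinPath) : G.V :=
  ((μ.edges.getLast?).map G.r).getD μ.src

/-- The length of a finite path. -/
def FinPath.length (μ : G.FinPath) : ℕ := μ.edges.length

variable (G)

/-- An infinite path. -/
structure InfPath where
  edges : ℕ → G.E
  chain : ∀ n, G.r (edges n) = G.s (edges (n + 1))

/-- The source of an infinite path. -/
def InfPath.src {G : DirGraph} (p : G.InfPath) : G.V := G.s (p.edges 0)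

def IsSink (v : G.V) : Prop := ∀ e, G.s e ≠ v

def IsInfEmitter (v : G.V) : Prop := {e | G.s e = v}.Infinite

def IsSingular (v : G.V) : Prop := IsSink G v ∨ IsInfEmitter G v

/-- Boundary paths: infinite paths, together with finite paths ending in a singular vertex. -/
def BPath : Type := {x : G.FinPath ⊕ G.InfPath // ∀ μ, x = Sum.inl μ → IsSingular G μ.rng}

variable {G}

/-- The source of a boundary path. -/
def BPath.src (x : G.BPath) : G.V :=
  match x.1 with
  | Sum.inl μ => μ.src
  | Sum.inr p => p.src

def BPath.IsInfinite (x : G.BPath) : Prop := ∃ p, x.1 = Sum.inr p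

/-- `IsCat μ p x` means `x = μ p`, i.e. `x` is the concatenation of the finite path `μ`
with the boundary path `p` (in particular `r(μ) = s(p)`). -/
def IsCat (μ : G.FinPath) (p x : G.BPath) : Prop :=
  μ.rng = p.src ∧
  match p.1, x.1 with
  | Sum.inl q, Sum.inl ξ => ξ.src = μ.src ∧ ξ.edges = μ.edges ++ q.edges
  | Sum.inr q, Sum.inr ξ =>
      (∀ (i : ℕ) (h : i < μ.edges.length), ξ.edges i = μ.edges.get ⟨i, h⟩) ∧
      (∀ i : ℕ, ξ.edges (μ.edges.length + i) = q.edges i)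
  | _, _ => False

/-- `x ∼_k y` : tail equivalence with lag `k`. -/
def TailEqLag (x y : G.BPath) (k : ℤ) : Prop :=
  ∃ (μ ν : G.FinPath) (p : G.BPath),
    IsCat μ p x ∧ IsCat ν p y ∧ (μ.length : ℤ) - (ν.length : ℤ) = k

/-- Tail equivalence. -/
def TailEq (x y : G.BPath) : Prop := ∃ k, TailEqLag x y k

/-- The tail-equivalence class (orbit) of a boundary path. -/
def orbit (x : G.BPath) : Set G.BPath := {y | TailEq y x}

/-- A closed path: positive length, same source and range. -/
def FinPath.IsClosed (c : G.FinPath) : Prop := 0 < c.length ∧ c.rng = c.src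

/-- A boundary path is rational if it is tail equivalent to `c^∞` for some closed path `c`;
here `c^∞` is characterized as the unique boundary path `p` with `p = c p`. -/
def IsRational (x : G.BPath) : Prop :=
  ∃ (c : G.FinPath) (p : G.BPath), 0 < c.length ∧ IsCat c p p ∧ TailEq x p

/-- A simple closed path: a closed path which is not a proper power of a closed path. -/
def FinPath.IsSimpleClosed (c : G.FinPath) : Prop :=
  c.IsClosed ∧
    ¬ ∃ (d : G.FinPath) (n : ℕ), 2 ≤ n ∧ d.IsClosed ∧ c.src = d.src ∧
        c.edges = (List.replicate n d.edges).flatten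

/-- A cycle: a closed path passing through no vertex twice. -/
def FinPath.IsCycle (c : G.FinPath) : Prop := c.IsClosed ∧ (c.edges.map G.s).Nodup

/-- An exit for a finite path. -/
def FinPath.HasExit (c : G.FinPath) : Prop :=
  ∃ (i : ℕ) (h : i < c.edges.length) (e : G.E),
    G.s e = G.s (c.edges.get ⟨i, h⟩) ∧ e ≠ c.edges.get ⟨i, h⟩

/-- `c` is a rotation of `d`. -/
def FinPath.IsRotationOf (c d : G.FinPath) : Prop := ∃ i, c.edges = d.edges.rotate i

/-- A maximal cycle: a cycle such that any cycle from which there is a finite path to its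
source is a rotation of it. -/
def FinPath.IsMaxCycle (c : G.FinPath) : Prop :=
  c.IsCycle ∧ ∀ d : G.FinPath, d.IsCycle →
    (∃ μ : G.FinPath, μ.src = d.src ∧ μ.rng = c.src) → d.IsRotationOf c

/-- A maximal sink: a sink with no finite path from the source of any cycle to it. -/
def IsMaxSink (G : DirGraph) (v : G.V) : Prop :=
  IsSink G v ∧ ¬ ∃ (d μ : G.FinPath), d.IsCycle ∧ μ.src = d.src ∧ μ.rng = v

/-- A graph is row-finite if every vertex emits finitely many edges. -/
def RowFinite (G : DirGraph) : Prop := ∀ v : G.V, {e | G.s e = v}.Finite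

/-- The set of predecessors of a vertex. -/
def preds (G : DirGraph) (v : G.V) : Set G.V := {w | ∃ μ : G.FinPath, μ.src = w ∧ μ.rng = v}

/-- The finite path of length 0 at a vertex. -/
def vertexPath (G : DirGraph) (v : G.V) : G.FinPath :=
  ⟨v, [], by intro e he; simp at he, List.IsChain.nil⟩

/-- A singular vertex, seen as a boundary path. -/
def vertexBPath (G : DirGraph) (v : G.V) (h : IsSingular G v) : G.BPath :=
  ⟨Sum.inl (vertexPath G v), by
    intro μ hμ
    injection hμ with h2
    subst h2
    exact h⟩

/-- The finite path consisting of a single edge. -/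
def singleE (G : DirGraph) (e : G.E) : G.FinPath :=
  ⟨G.s e, [e], by
    intro f hf
    simp only [List.head?_cons, Option.mem_def, Option.some.injEq] at hf
    subst hf
    rfl, List.IsChain.singleton e⟩

/-- `a_μ`: the product of the values of `a` along a finite path. -/
def aval {G : DirGraph} {K : Type} [Field K] (a : G.E → K) (μ : G.FinPath) : K :=
  (μ.edges.map a).prod

/-! ## The Leavitt path algebra -/

/-- Generators of the Leavitt path algebra: vertices, edges and ghost edges. -/
inductive Gen (G : DirGraph) : Type
  | vtx : G.V → Gen G
  | edg : G.E → Gen G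
  | ghd : G.E → Gen G

/-- The defining relations of the Leavitt path algebra. -/
inductive LRel (G : DirGraph) (K : Type) [Field K] :
    FreeAlgebra K (Gen G) → FreeAlgebra K (Gen G) → Prop
  | vv_eq (v : G.V) :
      LRel G K (FreeAlgebra.ι K (Gen.vtx v) * FreeAlgebra.ι K (Gen.vtx v))
        (FreeAlgebra.ι K (Gen.vtx v))
  | vv_ne {v w : G.V} (h : v ≠ w) :
      LRel G K (FreeAlgebra.ι K (Gen.vtx v) * FreeAlgebra.ι K (Gen.vtx w)) 0
  | e1l (e : G.E) :
      LRel G K (FreeAlgebra.ι K (Gen.vtx (G.s e)) * FreeAlgebra.ι K (Gen.edg e))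
        (FreeAlgebra.ι K (Gen.edg e))
  | e1r (e : G.E) :
      LRel G K (FreeAlgebra.ι K (Gen.edg e) * FreeAlgebra.ι K (Gen.vtx (G.r e)))
        (FreeAlgebra.ι K (Gen.edg e))
  | e2l (e : G.E) :
      LRel G K (FreeAlgebra.ι K (Gen.vtx (G.r e)) * FreeAlgebra.ι K (Gen.ghd e))
        (FreeAlgebra.ι K (Gen.ghd e))
  | e2r (e : G.E) :
      LRel G K (FreeAlgebra.ι K (Gen.ghd e) * FreeAlgebra.ι K (Gen.vtx (G.s e)))
        (FreeAlgebra.ι K (Gen.ghd e))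
  | ck1_eq (e : G.E) :
      LRel G K (FreeAlgebra.ι K (Gen.ghd e) * FreeAlgebra.ι K (Gen.edg e))
        (FreeAlgebra.ι K (Gen.vtx (G.r e)))
  | ck1_ne {e f : G.E} (h : e ≠ f) :
      LRel G K (FreeAlgebra.ι K (Gen.ghd e) * FreeAlgebra.ι K (Gen.edg f)) 0
  | ck2 (v : G.V) (hfin : {e | G.s e = v}.Finite) (hne : ∃ e, G.s e = v) :
      LRel G K (FreeAlgebra.ι K (Gen.vtx v))
        (∑ e ∈ hfin.toFinset, FreeAlgebra.ι K (Gen.edg e) * FreeAlgebra.ι K (Gen.ghd e))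

/-- The Leavitt path algebra of `G` over `K`. -/
abbrev LPA (G : DirGraph) (K : Type) [Field K] : Type := RingQuot (LRel G K)

/-- The image of a vertex in the Leavitt path algebra. -/
def ofV (G : DirGraph) (K : Type) [Field K] (v : G.V) : LPA G K :=
  RingQuot.mkAlgHom K (LRel G K) (FreeAlgebra.ι K (Gen.vtx v))

/-- The image of an edge in the Leavitt path algebra. -/
def ofE (G : DirGraph) (K : Type) [Field K] (e : G.E) : LPA G K :=
  RingQuot.mkAlgHom K (LRel G K) (FreeAlgebra.ι K (Gen.edg e))

/-- The image of a ghost edge in the Leavitt path algebra. -/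
def ofG (G : DirGraph) (K : Type) [Field K] (e : G.E) : LPA G K :=
  RingQuot.mkAlgHom K (LRel G K) (FreeAlgebra.ι K (Gen.ghd e))

/-- The element `μ` of the Leavitt path algebra associated to a finite path `μ`. -/
def pathElem (G : DirGraph) (K : Type) [Field K] (μ : G.FinPath) : LPA G K :=
  ofV G K μ.src * (μ.edges.map (ofE G K)).prod

/-- The element `μ^*` of the Leavitt path algebra associated to a finite path `μ`. -/
def pathStarElem (G : DirGraph) (K : Type) [Field K] (μ : G.FinPath) : LPA G K :=
  (μ.edges.reverse.map (ofG G K)).prod * ofV G K μ.src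

/-- The degree-`n` homogeneous component of the canonical `ℤ`-grading of the Leavitt
path algebra: the span of the monomials `μ ν^*` with `|μ| - |ν| = n`. -/
def LPAdeg (G : DirGraph) (K : Type) [Field K] (n : ℤ) : Submodule K (LPA G K) :=
  Submodule.span K {x | ∃ μ ν : G.FinPath, μ.rng = ν.rng ∧
    (μ.length : ℤ) - (ν.length : ℤ) = n ∧ x = pathElem G K μ * pathStarElem G K ν}

/-- `W` is a `ℤ`-grading making `M` a graded module over the canonically graded
Leavitt path algebra. -/
def IsModuleGrading (G : DirGraph) (K : Type) [Field K] (M : Type) [AddCommGroup M]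
    [Module K M] [Module (LPA G K) M] (W : ℤ → Submodule K M) : Prop :=
  DirectSum.IsInternal W ∧
    ∀ (m k : ℤ) (a : LPA G K) (y : M), a ∈ LPAdeg G K m → y ∈ W k → a • y ∈ W (m + k)

/-- A set is graded (with respect to a grading `W`) if each of its elements is a finite sum
of homogeneous elements of the set. -/
def GradedCarrier {K M : Type} [Field K] [AddCommGroup M] [Module K M]
    (W : ℤ → Submodule K M) (S : Set M) : Prop :=
  ∀ m ∈ S, ∃ l : List M, (∀ z ∈ l, z ∈ S ∧ ∃ k, z ∈ W k) ∧ l.sum = m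

/-- A graded isomorphism between graded modules over the Leavitt path algebra. -/
def GradedIsoLPA (G : DirGraph) (K : Type) [Field K] (M N : Type)
    [AddCommGroup M] [AddCommGroup N] [Module K M] [Module K N]
    [Module (LPA G K) M] [Module (LPA G K) N]
    (W : ℤ → Submodule K M) (W' : ℤ → Submodule K N) : Prop :=
  ∃ f : M ≃ₗ[LPA G K] N, (∀ k, ∀ m ∈ W k, f m ∈ W' k) ∧ ∀ k, ∀ n ∈ W' k, f.symm n ∈ W k

/-- A module over the Leavitt path algebra is unital if it is generated by the images of the
vertices. -/
def IsUnitalModule (G : DirGraph) (K : Type) [Field K] (M : Type) [AddCommGroup M]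
    [Module (LPA G K) M] : Prop :=
  ∀ m : M, m ∈ Submodule.span (LPA G K) {y : M | ∃ (v : G.V) (m' : M), y = ofV G K v • m'}

/-! ## Chen modules, specified by a basis and the action of the generators -/

/-- A specification of the (twisted) Chen module attached to a boundary path `x`:
an `L_K(E)`-module `M` which is a `K'`-vector space with basis the tail-equivalence class
of `x`, the generators acting by the τ-twisted shift formulas. Here `K ⊆ K'` is a field
extension and `τ : E¹ → K'` is a family of nonzero scalars. -/
structure ChenSpecT (G : DirGraph) (K K' : Type) [Field K] [Field K'] [Algebra K K']
    (τ : G.E → K') (x : G.BPath) (M : Type) [AddCommGroup M] [Module K' M]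
    [Module (LPA G K) M] : Type where
  tau_ne : ∀ e, τ e ≠ 0
  basis : Module.Basis (orbit x) K' M
  act_v : ∀ (v : G.V) (p : orbit x),
    ofV G K v • basis p = if v = BPath.src (p : G.BPath) then basis p else 0
  act_e : ∀ (e : G.E) (p q : orbit x), IsCat (singleE G e) (p : G.BPath) (q : G.BPath) →
    ofE G K e • basis p = τ e • basis q
  act_e_zero : ∀ (e : G.E) (p : orbit x),
    (¬ ∃ q : G.BPath, IsCat (singleE G e) (p : G.BPath) q) → ofE G K e • basis p = 0
  act_g : ∀ (e : G.E) (p q : orbit x), IsCat (singleE G e) (p : G.BPath) (q : G.BPath) →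
    ofG G K e • basis q = (τ e)⁻¹ • basis p
  act_g_zero : ∀ (e : G.E) (q : orbit x),
    (¬ ∃ p : G.BPath, IsCat (singleE G e) p (q : G.BPath)) → ofG G K e • basis q = 0

/-- Specification of the Chen module `V_{[x]}^a` twisted by `a : E¹ → K^*`
(`a = 1` gives `V_{[x]}`). -/
abbrev ChenSpec (G : DirGraph) (K : Type) [Field K] (a : G.E → K) (x : G.BPath) (M : Type)
    [AddCommGroup M] [Module K M] [Module (LPA G K) M] : Type :=
  ChenSpecT G K K a x M

/-- The canonical grading on a Chen module: the degree-`k` component is spanned by the basis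
elements tail-equivalent to `x` with lag `k`. -/
def chenW {G : DirGraph} {K' : Type} [Field K'] {x : G.BPath} {M : Type}
    [AddCommGroup M] [Module K' M] (b : Module.Basis (orbit x) K' M) (k : ℤ) : Submodule K' M :=
  Submodule.span K' (⇑b '' {p : orbit x | TailEqLag (p : G.BPath) x k})

/-! ## The module `K L_x` -/

/-- The set `L_x` of pairs `(y, k)` with `y ∼_k x`. -/
def Lset (G : DirGraph) (x : G.BPath) : Set (G.BPath × ℤ) := {yk | TailEqLag yk.1 x yk.2}

/-- The underlying `K`-vector space of the module `K L_x`, with basis `L_x`. -/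
abbrev KLCarrier (G : DirGraph) (K : Type) [Field K] (x : G.BPath) : Type := (Lset G x) →₀ K

/-- Specification of the `L_K(E)`-module structure on `K L_x`, given by
`(μ ν^*) ⬝ (y, k) = (μ p, |μ| - |ν| + k)` when `y = ν p`, and `0` otherwise. The module
structure is encoded as a `K`-algebra homomorphism `ρ` to the endomorphism algebra. -/
def KLSpec (G : DirGraph) (K : Type) [Field K] (x : G.BPath)
    (ρ : LPA G K →ₐ[K] Module.End K (KLCarrier G K x)) : Prop :=
  (∀ (μ ν : G.FinPath), μ.rng = ν.rng → ∀ (yk zk : Lset G x) (p : G.BPath),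
      IsCat ν p (yk : G.BPath × ℤ).1 → IsCat μ p (zk : G.BPath × ℤ).1 →
      (zk : G.BPath × ℤ).2 = (yk : G.BPath × ℤ).2 + (μ.length : ℤ) - (ν.length : ℤ) →
      ρ (pathElem G K μ * pathStarElem G K ν) (Finsupp.single yk 1) = Finsupp.single zk 1) ∧
  (∀ (μ ν : G.FinPath), μ.rng = ν.rng → ∀ yk : Lset G x,
      (¬ ∃ p : G.BPath, IsCat ν p (yk : G.BPath × ℤ).1) →
      ρ (pathElem G K μ * pathStarElem G K ν) (Finsupp.single yk 1) = 0)

/-- The canonical grading of `K L_x`: `(y, k)` is homogeneous of degree `k`. -/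
noncomputable def KLgr (G : DirGraph) (K : Type) [Field K] (x : G.BPath) (k : ℤ) :
    Submodule K (KLCarrier G K x) :=
  Submodule.span K {m | ∃ yk : Lset G x, (yk : G.BPath × ℤ).2 = k ∧ m = Finsupp.single yk 1}

end DirGraph

open DirGraph

/-!
For `x` not rational, a path `y ∈ [x]` determines its decomposition `y = μ q`, `x = ν q` up to
extending `μ` and `ν` by a common path `σ`: a nonempty `σ` with `q = σ q` would make `x` rational.
Hence, with `d = b / a`, the scalar `w y = d_μ / d_ν` is well defined, and `w (e y) = d_e w y`.
This is exactly what makes `y ↦ w y • y` an `L_K(E)`-linear map `V^a_[x] → V^b_[x]`; it is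
diagonal in the basis `[x]`, so it is a graded isomorphism.
-/

namespace DirGraph

variable {G : DirGraph}

theorem FinPath.ext {μ ν : G.FinPath} (h1 : μ.src = ν.src) (h2 : μ.edges = ν.edges) : μ = ν := by
  cases μ; cases ν; simp_all

@[simp] theorem FinPath.length_eq (μ : G.FinPath) : μ.length = μ.edges.length := rfl

theorem FinPath.rng_of_edges_eq_nil {μ : G.FinPath} (h : μ.edges = []) : μ.rng = μ.src := by
  simp [FinPath.rng, h]

theorem FinPath.rng_of_mem_getLast? {μ : G.FinPath} {e : G.E} (h : e ∈ μ.edges.getLast?) :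
    μ.rng = G.r e := by
  simp only [Option.mem_def] at h
  simp [FinPath.rng, h]

def FinPath.comp (β α : G.FinPath) (h : β.rng = α.src) : G.FinPath where
  src := β.src
  edges := β.edges ++ α.edges
  src_eq := by
    intro e he
    rcases hβ : β.edges with _ | ⟨b, l⟩
    · rw [hβ, List.nil_append] at he
      rw [α.src_eq e he, ← h, FinPath.rng_of_edges_eq_nil hβ]
    · rw [hβ, List.cons_append, List.head?_cons, Option.mem_some_iff] at he
      exact he ▸ β.src_eq b (by rw [hβ]; rfl)
  chain := by
    refine List.IsChain.append β.chain α.chain fun e he f hf => ?_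
    rw [α.src_eq f hf, ← h, FinPath.rng_of_mem_getLast? he]

@[simp] theorem FinPath.comp_src (β α : G.FinPath) (h) : (β.comp α h).src = β.src := rfl

@[simp] theorem FinPath.comp_edges (β α : G.FinPath) (h) :
    (β.comp α h).edges = β.edges ++ α.edges := rfl

theorem FinPath.comp_rng (β α : G.FinPath) (h) : (β.comp α h).rng = α.rng := by
  rcases hα : α.edges.getLast? with _ | e
  · have hnil : α.edges = [] := by simpa using hα
    rw [FinPath.rng_of_edges_eq_nil hnil, ← h]
    simp [FinPath.rng, hnil]
  · rw [FinPath.rng_of_mem_getLast? (μ := α) hα, FinPath.rng_of_mem_getLast? (μ := β.comp α h)]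
    simp [hα]

theorem FinPath.exists_comp_of_edges_eq_append {μ μ' : G.FinPath} {t : List G.E}
    (hsrc : μ'.src = μ.src) (ht : μ'.edges = μ.edges ++ t) :
    ∃ (σ : G.FinPath) (h : μ.rng = σ.src), μ' = μ.comp σ h := by
  have hchain := List.isChain_append.mp (ht ▸ μ'.chain : (μ.edges ++ t).IsChain _)
  have hsrcσ : ∀ f ∈ t.head?, G.s f = μ.rng := by
    intro f hf
    rcases hμ : μ.edges.getLast? with _ | e
    · have hnil : μ.edges = [] := by simpa using hμ
      rw [FinPath.rng_of_edges_eq_nil hnil, ← hsrc]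
      exact μ'.src_eq f (by rwa [ht, hnil, List.nil_append])
    · rw [FinPath.rng_of_mem_getLast? hμ]
      exact (hchain.2.2 e hμ f hf).symm
  exact ⟨⟨μ.rng, t, hsrcσ, hchain.2.1⟩, rfl, FinPath.ext hsrc ht⟩

@[simp] theorem BPath.src_inr (p : G.InfPath) (h) :
    BPath.src (⟨Sum.inr p, h⟩ : G.BPath) = G.s (p.edges 0) := rfl

theorem isCat_vertexPath (p : G.BPath) : IsCat (vertexPath G p.src) p p := by
  refine ⟨rfl, ?_⟩
  rcases p with ⟨p | p, hp⟩
  · exact ⟨rfl, rfl⟩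
  · exact ⟨fun i h => by simp [vertexPath] at h, fun i => by simp [vertexPath]⟩

theorem IsCat.src_eq {α : G.FinPath} {p y : G.BPath} (h : IsCat α p y) : y.src = α.src := by
  obtain ⟨hrng, h⟩ := h
  rcases y with ⟨ξ | ζ, hy⟩ <;> rcases p with ⟨ρ | ρ, hp⟩ <;> simp only at h
  · exact h.1
  · obtain ⟨hpre, hsuf⟩ := h
    rcases hα : α.edges with _ | ⟨b, l⟩
    · have h0 : ζ.edges 0 = ρ.edges 0 := by simpa [hα] using hsuf 0
      rw [BPath.src_inr, h0, ← FinPath.rng_of_edges_eq_nil hα, hrng]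
      rfl
    · have hlt : 0 < α.edges.length := by simp [hα]
      rw [BPath.src_inr, hpre 0 hlt]
      exact α.src_eq _ (by simp [hα])

theorem IsCat.comp {α β : G.FinPath} {p y z : G.BPath} (h2 : IsCat β y z) (h1 : IsCat α p y) :
    IsCat (β.comp α (h2.1.trans h1.src_eq)) p z := by
  refine ⟨(FinPath.comp_rng _ _ _).trans h1.1, ?_⟩
  replace h1 := h1.2
  replace h2 := h2.2
  rcases z with ⟨ξ | ζ, hz⟩ <;> rcases y with ⟨yξ | yζ, hy⟩ <;> rcases p with ⟨ρ | ρ, hp⟩ <;>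
    simp only at h1 h2 ⊢
  · exact ⟨h2.1, by rw [FinPath.comp_edges, h2.2, h1.2, List.append_assoc]⟩
  · obtain ⟨hα, hρ⟩ := h1
    obtain ⟨hβ, hy⟩ := h2
    refine ⟨fun i hi => ?_, fun i => ?_⟩
    · simp only [FinPath.comp_edges, List.length_append, List.get_eq_getElem] at hi ⊢
      rcases lt_or_ge i β.edges.length with hib | hib
      · rw [List.getElem_append_left hib]
        simpa using hβ i hib
      · obtain ⟨j, rfl⟩ := Nat.exists_eq_add_of_le hib
        rw [List.getElem_append_right hib, hy j]
        simpa using hα j (by omega)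
    · simp only [FinPath.comp_edges, List.length_append]
      rw [Nat.add_assoc, hy, hρ]

theorem IsCat.edges_prefix {μ μ' : G.FinPath} {q q' p : G.BPath} (hμ : IsCat μ q p)
    (hμ' : IsCat μ' q' p) (hle : μ.length ≤ μ'.length) : μ.edges <+: μ'.edges := by
  obtain ⟨-, hμ⟩ := hμ
  obtain ⟨-, hμ'⟩ := hμ'
  rcases p with ⟨ξ | ζ, hp⟩ <;> rcases q with ⟨ρ | ρ, hq⟩ <;> rcases q' with ⟨ρ' | ρ', hq'⟩ <;>
    simp only at hμ hμ'
  · exact List.prefix_of_prefix_length_le ⟨ρ.edges, hμ.2.symm⟩ ⟨ρ'.edges, hμ'.2.symm⟩ hle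
  · have htake : μ'.edges.take μ.edges.length = μ.edges := by
      refine List.ext_getElem (by simpa using hle) fun i hi₁ hi₂ => ?_
      simp only [List.getElem_take]
      have := (hμ'.1 i (by simp at hi₁; omega)).symm.trans (hμ.1 i hi₂)
      simpa using this
    exact htake ▸ List.take_prefix _ _

theorem IsCat.of_comp {μ σ : G.FinPath} {h : μ.rng = σ.src} {q q' p : G.BPath}
    (hμ : IsCat μ q p) (hμσ : IsCat (μ.comp σ h) q' p) : IsCat σ q' q := by
  refine ⟨(FinPath.comp_rng μ σ h).symm.trans hμσ.1, ?_⟩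
  obtain ⟨hrng, hμ⟩ := hμ
  obtain ⟨-, hμσ⟩ := hμσ
  rcases p with ⟨ξ | ζ, hp⟩ <;> rcases q with ⟨ρ | ρ, hq⟩ <;> rcases q' with ⟨ρ' | ρ', hq'⟩ <;>
    simp only at hμ hμσ ⊢
  · refine ⟨hrng.symm.trans h, List.append_cancel_left (as := μ.edges) ?_⟩
    rw [← hμ.2, hμσ.2, FinPath.comp_edges, List.append_assoc]
  · refine ⟨fun i hi => ?_, fun i => ?_⟩
    · have hi' : μ.edges.length + i < (μ.comp σ h).edges.length := by simp; omega
      rw [← hμ.2 i, hμσ.1 _ hi']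
      simp [List.getElem_append_right]
    · rw [← hμ.2, ← hμσ.2, FinPath.comp_edges, List.length_append, Nat.add_assoc]

theorem IsCat.exists_comp_of_length_le {μ μ' : G.FinPath} {q q' p : G.BPath}
    (hμ : IsCat μ q p) (hμ' : IsCat μ' q' p) (hle : μ.length ≤ μ'.length) :
    ∃ (σ : G.FinPath) (h : μ.rng = σ.src), μ' = μ.comp σ h ∧ IsCat σ q' q := by
  obtain ⟨t, ht⟩ := hμ.edges_prefix hμ' hle
  obtain ⟨σ, h, rfl⟩ :=
    FinPath.exists_comp_of_edges_eq_append (hμ'.src_eq.symm.trans hμ.src_eq) ht.symm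
  exact ⟨σ, h, rfl, hμ.of_comp hμ'⟩

theorem tailEq_of_isCat {y w p : G.BPath} {μ ν : G.FinPath} (h1 : IsCat μ p y)
    (h2 : IsCat ν p w) : TailEq y w :=
  ⟨_, μ, ν, p, h1, h2, rfl⟩

theorem TailEq.trans {y z w : G.BPath} (h1 : TailEq y z) (h2 : TailEq z w) : TailEq y w := by
  obtain ⟨-, μ, ν, p, hμ, hν, -⟩ := h1
  obtain ⟨-, μ', ν', p', hμ', hν', -⟩ := h2
  rcases le_total ν.length μ'.length with hle | hle
  · obtain ⟨σ, -, -, hσ⟩ := hν.exists_comp_of_length_le hμ' hle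
    exact tailEq_of_isCat (hμ.comp hσ) hν'
  · obtain ⟨σ, -, -, hσ⟩ := hμ'.exists_comp_of_length_le hν hle
    exact tailEq_of_isCat hμ (hν'.comp hσ)

theorem IsCat.mem_orbit_iff {x p q : G.BPath} {μ : G.FinPath} (h : IsCat μ p q) :
    q ∈ orbit x ↔ p ∈ orbit x :=
  ⟨(tailEq_of_isCat (isCat_vertexPath p) h).trans, (tailEq_of_isCat h (isCat_vertexPath p)).trans⟩

theorem IsCat.eq_of_not_isRational {x q : G.BPath} (hx : ¬ IsRational x) {γ ν : G.FinPath}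
    (hγ : IsCat γ q x) (hν : IsCat ν q x) : γ = ν := by
  wlog hle : γ.length ≤ ν.length generalizing γ ν
  · exact (this hν hγ (le_of_not_ge hle)).symm
  obtain ⟨σ, hσ, rfl, hcat⟩ := hγ.exists_comp_of_length_le hν hle
  -- `q = σ q`, so a nonempty `σ` would make `x` tail equivalent to `σ^∞ = q`
  have hnil : σ.edges = [] := by
    by_contra hne
    exact hx ⟨σ, q, List.length_pos_iff.mpr hne, hcat,
      tailEq_of_isCat hγ (isCat_vertexPath q)⟩
  exact FinPath.ext rfl (by simp [hnil])

variable {K : Type} [Field K]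

theorem aval_ne_zero {d : G.E → K} (hd : ∀ e, d e ≠ 0) (μ : G.FinPath) : aval d μ ≠ 0 :=
  List.prod_ne_zero fun h => by
    obtain ⟨e, -, he⟩ := List.mem_map.mp h
    exact hd e he

theorem aval_comp (d : G.E → K) (β α : G.FinPath) (h) :
    aval d (β.comp α h) = aval d β * aval d α := by
  simp [aval]

@[simp] theorem aval_singleE (d : G.E → K) (e : G.E) : aval d (singleE G e) = d e := by
  simp [aval, singleE]

theorem aval_mul_aval_eq_of_not_isRational {x : G.BPath} (hx : ¬ IsRational x) (d : G.E → K)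
    {μ ν μ' ν' : G.FinPath} {q q' p : G.BPath}
    (h1 : IsCat μ q p) (h2 : IsCat ν q x) (h3 : IsCat μ' q' p) (h4 : IsCat ν' q' x) :
    aval d μ * aval d ν' = aval d μ' * aval d ν := by
  wlog hle : μ.length ≤ μ'.length generalizing μ ν μ' ν' q q'
  · exact (this h3 h4 h1 h2 (le_of_not_ge hle)).symm
  obtain ⟨σ, hσ, rfl, hcat⟩ := h1.exists_comp_of_length_le h3 hle
  rw [h4.eq_of_not_isRational hx (h2.comp hcat), aval_comp, aval_comp]
  ring

theorem exists_orbit_weight {x : G.BPath} (hx : ¬ IsRational x) {d : G.E → K}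
    (hd : ∀ e, d e ≠ 0) :
    ∃ w : orbit x → K, (∀ p, w p ≠ 0) ∧
      ∀ (e : G.E) (p q : orbit x), IsCat (singleE G e) p q → w q = d e * w p := by
  have hwit (p : orbit x) : ∃ (μ ν : G.FinPath) (r : G.BPath), IsCat μ r p ∧ IsCat ν r x := by
    obtain ⟨-, μ, ν, r, h1, h2, -⟩ := p.2
    exact ⟨μ, ν, r, h1, h2⟩
  choose μ ν r hμ hν using hwit
  refine ⟨fun p => aval d (μ p) / aval d (ν p),
    fun p => div_ne_zero (aval_ne_zero hd _) (aval_ne_zero hd _), fun e p q he => ?_⟩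
  have key := aval_mul_aval_eq_of_not_isRational hx d (hμ q) (hν q) (he.comp (hμ p)) (hν p)
  rw [aval_comp, aval_singleE] at key
  have := aval_ne_zero hd (ν p)
  have := aval_ne_zero hd (ν q)
  field_simp
  linear_combination key

theorem chenW_le_comap {K' : Type} [Field K'] {x : G.BPath} {M M' : Type} [AddCommGroup M]
    [AddCommGroup M'] [Module K' M] [Module K' M'] {b : Module.Basis (orbit x) K' M}
    {b' : Module.Basis (orbit x) K' M'} (f : M →ₗ[K'] M') (c : orbit x → K')
    (hf : ∀ p, f (b p) = c p • b' p) (k : ℤ) : chenW b k ≤ (chenW b' k).comap f :=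
  Submodule.span_le.mpr <| by
    rintro _ ⟨p, hp, rfl⟩
    show f (b p) ∈ chenW b' k
    rw [hf]
    exact Submodule.smul_mem _ _ (Submodule.subset_span ⟨p, hp, rfl⟩)

section LPAModule

variable {M N : Type} [AddCommGroup M] [Module K M] [Module (LPA G K) M]
  [IsScalarTower K (LPA G K) M] [AddCommGroup N] [Module K N] [Module (LPA G K) N]
  [IsScalarTower K (LPA G K) N]

theorem map_smul_of_generators {ι : Type*} (bM : Module.Basis ι K M) (f : M →ₗ[K] N)
    (hv : ∀ v i, f (ofV G K v • bM i) = ofV G K v • f (bM i))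
    (he : ∀ e i, f (ofE G K e • bM i) = ofE G K e • f (bM i))
    (hg : ∀ e i, f (ofG G K e • bM i) = ofG G K e • f (bM i))
    (η : LPA G K) (m : M) : f (η • m) = η • f m := by
  have of_basis (θ : LPA G K) (h : ∀ i, f (θ • bM i) = θ • f (bM i)) (m : M) :
      f (θ • m) = θ • f m :=
    LinearMap.congr_fun (bM.ext (f₁ := f ∘ₗ DistribSMul.toLinearMap K M θ)
      (f₂ := DistribSMul.toLinearMap K N θ ∘ₗ f) h) m
  obtain ⟨t, rfl⟩ := RingQuot.mkAlgHom_surjective K (LRel G K) η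
  induction t using FreeAlgebra.induction generalizing m with
  | grade0 r => rw [AlgHom.commutes, algebraMap_smul, algebraMap_smul, map_smul]
  | grade1 g =>
    rcases g with v | e | e
    · exact of_basis _ (hv v) m
    · exact of_basis _ (he e) m
    · exact of_basis _ (hg e) m
  | add s t hs ht => rw [map_add, add_smul, add_smul, map_add, hs, ht]
  | mul s t hs ht => rw [map_mul, mul_smul, mul_smul, hs, ht]

namespace ChenSpec

variable {x : G.BPath} {a b : G.E → K}

theorem map_smul_of_weight (spM : ChenSpec G K a x M) (spN : ChenSpec G K b x N)
    (w : orbit x → K) (hw : ∀ e (p q : orbit x), IsCat (singleE G e) p q → a e * w q = b e * w p)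
    (f : M →ₗ[K] N) (hf : ∀ p, f (spM.basis p) = w p • spN.basis p)
    (η : LPA G K) (m : M) : f (η • m) = η • f m := by
  refine map_smul_of_generators spM.basis f (fun v p => ?_) (fun e p => ?_) (fun e p => ?_) η m
  · rw [spM.act_v, hf, smul_comm, spN.act_v]
    split_ifs
    · exact hf p
    · rw [map_zero, smul_zero]
  · rw [hf, smul_comm]
    by_cases h : ∃ q, IsCat (singleE G e) p q
    · obtain ⟨q, hq⟩ := h
      lift q to orbit x using hq.mem_orbit_iff.mpr p.2
      rw [spM.act_e e p q hq, map_smul, hf, spN.act_e e p q hq, smul_smul, smul_smul,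
        hw e p q hq, mul_comm]
    · rw [spM.act_e_zero e p h, spN.act_e_zero e p h, map_zero, smul_zero]
  · rw [hf, smul_comm]
    by_cases h : ∃ p', IsCat (singleE G e) p' p
    · obtain ⟨p', hp'⟩ := h
      lift p' to orbit x using hp'.mem_orbit_iff.mp p.2
      rw [spM.act_g e p' p hp', map_smul, hf, spN.act_g e p' p hp', smul_smul, smul_smul]
      have := spM.tau_ne e
      have := spN.tau_ne e
      congr 1
      field_simp
      linear_combination (hw e p' p hp').symm
    · rw [spM.act_g_zero e p h, spN.act_g_zero e p h, map_zero, smul_zero]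

theorem gradedIsoLPA_of_weight (spM : ChenSpec G K a x M) (spN : ChenSpec G K b x N)
    (w : orbit x → K) (hw0 : ∀ p, w p ≠ 0)
    (hw : ∀ e (p q : orbit x), IsCat (singleE G e) p q → a e * w q = b e * w p) :
    GradedIsoLPA G K M N (fun k => chenW spM.basis k) (fun k => chenW spN.basis k) := by
  let u (p : orbit x) : Kˣ := Units.mk0 (w p) (hw0 p)
  let f : M ≃ₗ[K] N := spM.basis.equiv (spN.basis.unitsSMul u) (Equiv.refl _)
  have hf (p : orbit x) : f (spM.basis p) = w p • spN.basis p := by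
    simp [f, u, Module.Basis.equiv_apply, Module.Basis.unitsSMul_apply]
  have hf_symm (p : orbit x) : f.symm (spN.basis p) = (w p)⁻¹ • spM.basis p := by
    rw [LinearEquiv.symm_apply_eq, map_smul, hf, smul_smul, inv_mul_cancel₀ (hw0 p), one_smul]
  refine ⟨{ f with map_smul' := spM.map_smul_of_weight spN w hw f.toLinearMap hf },
    fun k _ hm => chenW_le_comap f.toLinearMap w hf k hm,
    fun k _ hn => chenW_le_comap f.symm.toLinearMap (fun p => (w p)⁻¹) hf_symm k hn⟩

theorem gradedIsoLPA (hx : ¬ IsRational x) (spM : ChenSpec G K a x M)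
    (spN : ChenSpec G K b x N) :
    GradedIsoLPA G K M N (fun k => chenW spM.basis k) (fun k => chenW spN.basis k) := by
  obtain ⟨w, hw0, hw⟩ := exists_orbit_weight hx
    (fun e => div_ne_zero (spN.tau_ne e) (spM.tau_ne e))
  refine spM.gradedIsoLPA_of_weight spN w hw0 fun e p q he => ?_
  rw [hw e p q he, div_mul_eq_mul_div, mul_div_cancel₀ _ (spM.tau_ne e)]

end ChenSpec

end LPAModule

end DirGraph

/-- for `x ∈ ∂E` not rational and `a, b ∈ (K^*)^{E¹}`, there are graded
isomorphisms `V_{[x]}^a ≅ V_{[x]}^b ≅ V_{[x]}` of `ℤ`-graded `L_K(E)`-modules. -/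
theorem stmt_3 (G : DirGraph) (K : Type) [Field K]
    (x : G.BPath) (hx : ¬ IsRational x) (a b : G.E → K)
    (M : Type) [AddCommGroup M] [Module K M] [Module (LPA G K) M]
    [IsScalarTower K (LPA G K) M]
    (N : Type) [AddCommGroup N] [Module K N] [Module (LPA G K) N]
    [IsScalarTower K (LPA G K) N]
    (P : Type) [AddCommGroup P] [Module K P] [Module (LPA G K) P]
    [IsScalarTower K (LPA G K) P]
    (spM : ChenSpec G K a x M) (spN : ChenSpec G K b x N)
    (spP : ChenSpec G K (fun _ => 1) x P) :
    GradedIsoLPA G K M N (fun k => chenW spM.basis k) (fun k => chenW spN.basis k) ∧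
      GradedIsoLPA G K N P (fun k => chenW spN.basis k) (fun k => chenW spP.basis k) :=
  ⟨ChenSpec.gradedIsoLPA hx spM spN, ChenSpec.gradedIsoLPA hx spN spP⟩
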